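/- For every b ≥ 0, the truncated backward European put price with boundary value b satisfies V_E^b(0,0,0) = V̂^b, i.e. it equals V^{TT} plus the sum, over all jump-path prefixes that first exit the band [−l̄, k̄] at some time i with 1 ≤ i ≤ n, of the prefix probability times b·e^{−r·i·Δt}. -/

import Mathlib

open Finset

open scoped Classical

noncomputable section

namespace HScut

/-- Level of a jump path `s : Fin n → ℤ` at time `t` (sum of the first `t` jumps). -/
def levelAt (n : ℕ) (s : Fin n → ℤ) (t : ℕ) : ℤ :=
  ∑ i ∈ Finset.univ.filter (fun i : Fin n => (i : ℕ) < t), s i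

/-- Jump paths of length `n` with jumps of amplitude at most `m`. -/
def paths (n m : ℕ) : Finset (Fin n → ℤ) :=
  Fintype.piFinset fun _ => Finset.Icc (-(m : ℤ)) (m : ℤ)

/-- Weight `π(s) = ∏ q (s i)` of a jump path. -/
def pathWeight (n : ℕ) (q : ℤ → ℝ) (s : Fin n → ℤ) : ℝ :=
  ∏ i, q (s i)

/-- Modified weight `π̃(s)`, where each `q (±i)` (`i ≠ 0`) is replaced by `max (q i) (q (-i))`
(which equals `w_i / n`). -/
def modWeight (n : ℕ) (q : ℤ → ℝ) (s : Fin n → ℤ) : ℝ :=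
  ∏ i, (if s i = 0 then q 0 else max (q (s i)) (q (-s i)))

/-- `q^{(n)}(k)`: probability of a net balance of `k` cumulative jumps at maturity. -/
def qfull (n m : ℕ) (q : ℤ → ℝ) (k : ℤ) : ℝ :=
  ∑ s ∈ (paths n m).filter (fun s => levelAt n s n = k), pathWeight n q s

/-- `q̃^{(n)}(k)`: enlarged probability of a net balance of `k` cumulative jumps at maturity. -/
def qtilde (n m : ℕ) (q : ℤ → ℝ) (k : ℤ) : ℝ :=
  ∑ s ∈ (paths n m).filter (fun s => levelAt n s n = k), modWeight n q s

/-- `q^{k̄,(n)}(k)`: probability of a net balance of `k` jumps at maturity while reaching at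
some time a net balance higher than `k̄`. -/
def qup (n m : ℕ) (q : ℤ → ℝ) (kbar : ℕ) (k : ℤ) : ℝ :=
  ∑ s ∈ (paths n m).filter
      (fun s => levelAt n s n = k ∧ ∃ t ≤ n, (kbar : ℤ) + 1 ≤ levelAt n s t),
    pathWeight n q s

/-- `q_{l̄}^{(n)}(k)`: probability of a net balance of `k` jumps at maturity while reaching at
some time a net balance lower than `-l̄`. -/
def qdown (n m : ℕ) (q : ℤ → ℝ) (lbar : ℕ) (k : ℤ) : ℝ :=
  ∑ s ∈ (paths n m).filter
      (fun s => levelAt n s n = k ∧ ∃ t ≤ n, levelAt n s t ≤ -(lbar : ℤ) - 1),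
    pathWeight n q s

/-- `q^{cut,(n)}(k)`: probability of reaching level `k` at maturity without ever leaving the
band `[-l̄, k̄]`. -/
def qcut (n m : ℕ) (q : ℤ → ℝ) (kbar lbar : ℕ) (k : ℤ) : ℝ :=
  ∑ s ∈ (paths n m).filter
      (fun s => levelAt n s n = k ∧
        ∀ t ≤ n, -(lbar : ℤ) ≤ levelAt n s t ∧ levelAt n s t ≤ (kbar : ℤ)),
    pathWeight n q s

/-- `P(j) = C(n,j) p^j (1-p)^(n-j)`. -/
def binomP (n : ℕ) (p : ℝ) (j : ℕ) : ℝ :=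
  (n.choose j : ℝ) * p ^ j * (1 - p) ^ (n - j)

/-- Put payoff at the terminal node `(n, j, k)`. -/
def putPayoff (n : ℕ) (S0 K σ dt h : ℝ) (j : ℕ) (k : ℤ) : ℝ :=
  max (K - S0 * Real.exp ((2 * (j : ℝ) - (n : ℝ)) * (σ * Real.sqrt dt) + h * (k : ℝ))) 0

/-- European put value `V` on the full tree. -/
def Vput (n m : ℕ) (q : ℤ → ℝ) (p S0 K σ τ h r : ℝ) : ℝ :=
  Real.exp (-(r * τ)) *
    ∑ k ∈ Finset.Icc (-((m : ℤ) * n)) ((m : ℤ) * n), ∑ j ∈ Finset.range (n + 1),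
      putPayoff n S0 K σ (τ / n) h j k * binomP n p j * qfull n m q k

/-- European put value `V^{TT}` on the truncated tree. -/
def VTT (n m : ℕ) (q : ℤ → ℝ) (p S0 K σ τ h r : ℝ) (kbar lbar : ℕ) : ℝ :=
  Real.exp (-(r * τ)) *
    ∑ k ∈ Finset.Icc (-(lbar : ℤ)) (kbar : ℤ), ∑ j ∈ Finset.range (n + 1),
      putPayoff n S0 K σ (τ / n) h j k * binomP n p j * qcut n m q kbar lbar k

/-- The sequence `W_i`: `W₁ = w₁`, `W_{i+1} = w_{i+1} + W_i^{(i+1)/i}` (real powers). -/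
def Wseq (w : ℕ → ℝ) : ℕ → ℝ
  | 0 => 0
  | 1 => w 1
  | (i + 2) => w (i + 2) + Wseq w (i + 1) ^ (((i : ℝ) + 2) / ((i : ℝ) + 1))

/-- `M_i = max { W_i, W_i^{(1-i)/i} }` (real powers). -/
def Mseq (w : ℕ → ℝ) (i : ℕ) : ℝ :=
  max (Wseq w i) (Wseq w i ^ ((1 - (i : ℝ)) / (i : ℝ)))

/-- `G = 2 m max{W_m, 1} e^{W_m} ∏_{i=1}^{m-1} M_i²`. -/
def Gconst (w : ℕ → ℝ) (m : ℕ) : ℝ :=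
  2 * m * max (Wseq w m) 1 * Real.exp (Wseq w m) * ∏ i ∈ Finset.Icc 1 (m - 1), (Mseq w i) ^ 2

/-- Value of the underlying at a node with (real) time index `i`, `j` up Brownian moves and
net jump level `l`. -/
def Sval (S0 σ dt h : ℝ) (i : ℝ) (j : ℕ) (l : ℤ) : ℝ :=
  S0 * Real.exp ((2 * (j : ℝ) - i) * (σ * Real.sqrt dt) + (l : ℝ) * h)

/-- Full backward European put price; `VEfull … d j l` is the value `V_E(n-d, j, l)`
(`d` = number of remaining steps). -/
def VEfull (n m : ℕ) (q : ℤ → ℝ) (p dt S0 K σ h r : ℝ) : ℕ → ℕ → ℤ → ℝ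
  | 0, j, l => max (K - Sval S0 σ dt h (n : ℝ) j l) 0
  | (d + 1), j, l =>
      Real.exp (-(r * dt)) *
        ∑ k ∈ Finset.Icc (-(m : ℤ)) (m : ℤ),
          (VEfull n m q p dt S0 K σ h r d (j + 1) (l + k) * p +
            VEfull n m q p dt S0 K σ h r d j (l + k) * (1 - p)) * q k

/-- Full backward American put price; `VAfull … d j l` is the value `V_A(n-d, j, l)`. -/
def VAfull (n m : ℕ) (q : ℤ → ℝ) (p dt S0 K σ h r : ℝ) : ℕ → ℕ → ℤ → ℝ
  | 0, j, l => max (K - Sval S0 σ dt h (n : ℝ) j l) 0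
  | (d + 1), j, l =>
      max
        (Real.exp (-(r * dt)) *
          ∑ k ∈ Finset.Icc (-(m : ℤ)) (m : ℤ),
            (VAfull n m q p dt S0 K σ h r d (j + 1) (l + k) * p +
              VAfull n m q p dt S0 K σ h r d j (l + k) * (1 - p)) * q k)
        (K - Sval S0 σ dt h ((n : ℝ) - (d + 1)) j l)

/-- Truncated backward European put price with boundary value `b`;
`VEtr … d j l` is the value `V_E^b(n-d, j, l)`. -/
def VEtr (n m : ℕ) (q : ℤ → ℝ) (p dt S0 K σ h r b : ℝ) (kbar lbar : ℕ) :
    ℕ → ℕ → ℤ → ℝ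
  | 0, j, l =>
      if -(lbar : ℤ) ≤ l ∧ l ≤ (kbar : ℤ) then max (K - Sval S0 σ dt h (n : ℝ) j l) 0 else b
  | (d + 1), j, l =>
      if -(lbar : ℤ) ≤ l ∧ l ≤ (kbar : ℤ) then
        Real.exp (-(r * dt)) *
          ∑ k ∈ Finset.Icc (-(m : ℤ)) (m : ℤ),
            (VEtr n m q p dt S0 K σ h r b kbar lbar d (j + 1) (l + k) * p +
              VEtr n m q p dt S0 K σ h r b kbar lbar d j (l + k) * (1 - p)) * q k
      else b

/-- Truncated backward American put price with boundary value `b`;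
`VAtr … d j l` is the value `V_A^b(n-d, j, l)`. -/
def VAtr (n m : ℕ) (q : ℤ → ℝ) (p dt S0 K σ h r b : ℝ) (kbar lbar : ℕ) :
    ℕ → ℕ → ℤ → ℝ
  | 0, j, l =>
      if -(lbar : ℤ) ≤ l ∧ l ≤ (kbar : ℤ) then max (K - Sval S0 σ dt h (n : ℝ) j l) 0 else b
  | (d + 1), j, l =>
      if -(lbar : ℤ) ≤ l ∧ l ≤ (kbar : ℤ) then
        max
          (Real.exp (-(r * dt)) *
            ∑ k ∈ Finset.Icc (-(m : ℤ)) (m : ℤ),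
              (VAtr n m q p dt S0 K σ h r b kbar lbar d (j + 1) (l + k) * p +
                VAtr n m q p dt S0 K σ h r b kbar lbar d j (l + k) * (1 - p)) * q k)
          (K - Sval S0 σ dt h ((n : ℝ) - (d + 1)) j l)
      else b

/-- The sum, over all jump-path prefixes that first exit the band `[-l̄, k̄]` at some time
`1 ≤ i ≤ n`, of the prefix probability times `b e^{-r i Δt}`. -/
def exitSum (n m : ℕ) (q : ℤ → ℝ) (r dt : ℝ) (kbar lbar : ℕ) (b : ℝ) : ℝ :=
  ∑ i ∈ Finset.Icc 1 n,
    ∑ y ∈ (paths i m).filter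
        (fun y =>
          (∀ t < i, -(lbar : ℤ) ≤ levelAt i y t ∧ levelAt i y t ≤ (kbar : ℤ)) ∧
          ¬(-(lbar : ℤ) ≤ levelAt i y i ∧ levelAt i y i ≤ (kbar : ℤ))),
      pathWeight i q y * (b * Real.exp (-(r * (i : ℝ) * dt)))

end HScut

open HScut

/-!
Unfold the backward recursion along jump paths. The Brownian coordinate is abstracted into a
linear operator `T` (one discounted binomial step) with `T e = c • e` for the constant boundary
value `e`. Started at level `l`, the truncated recursion with `d` steps left equals the sum over
jump paths that stay in the band of `π(s) • T^d (payoff at the final level)`, plus `π(y) c^i e`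
for every prefix `y` that first leaves the band at time `i`; splitting off the first jump, this
is a single induction on `d`. Finally `T^n` expands binomially as `c^n ∑ P(j) ·`, and grouping the
surviving paths by their final level produces `q^{cut,(n)}`.
-/

namespace HScut

section Paths

variable {M : Type*} [AddCommMonoid M]

lemma levelAt_zero {d : ℕ} (s : Fin d → ℤ) : levelAt d s 0 = 0 := by
  simp [levelAt]

lemma levelAt_cons {d : ℕ} (k : ℤ) (s : Fin d → ℤ) (t : ℕ) :
    levelAt (d + 1) (Fin.cons k s) (t + 1) = k + levelAt d s t := by
  simp [levelAt, sum_filter, Fin.sum_univ_succ]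

lemma pathWeight_cons {d : ℕ} (q : ℤ → ℝ) (k : ℤ) (s : Fin d → ℤ) :
    pathWeight (d + 1) q (Fin.cons k s) = q k * pathWeight d q s := by
  simp [pathWeight, Fin.prod_univ_succ]

lemma sum_paths_zero (m : ℕ) (f : (Fin 0 → ℤ) → M) : ∑ s ∈ paths 0 m, f s = f Fin.elim0 := by
  rw [paths, Fintype.piFinset_of_isEmpty, univ_unique, sum_singleton]
  exact congrArg f (Subsingleton.elim _ _)

lemma sum_paths_succ (d m : ℕ) (f : (Fin (d + 1) → ℤ) → M) :
    ∑ s ∈ paths (d + 1) m, f s = ∑ k ∈ Icc (-(m : ℤ)) m, ∑ s ∈ paths d m, f (Fin.cons k s) := by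
  have h := filter_piFinset_eq_map_consEquiv (fun _ : Fin (d + 1) => Icc (-(m : ℤ)) m)
    (fun _ => True)
  simp only [filter_true] at h
  rw [paths, h, sum_map, sum_product]
  rfl

lemma sum_filter_paths_succ {d m : ℕ} {P : (Fin (d + 1) → ℤ) → Prop} {Q : ℤ → (Fin d → ℤ) → Prop}
    (hPQ : ∀ k s, P (Fin.cons k s) ↔ Q k s) (f : (Fin (d + 1) → ℤ) → M) :
    ∑ s ∈ (paths (d + 1) m).filter P, f s =
      ∑ k ∈ Icc (-(m : ℤ)) m, ∑ s ∈ (paths d m).filter (Q k), f (Fin.cons k s) := by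
  simp only [sum_filter, sum_paths_succ, hPQ]

end Paths

section Band

variable (B : ℤ → Prop)

def StaysIn (l : ℤ) {d : ℕ} (s : Fin d → ℤ) : Prop :=
  ∀ t ≤ d, B (l + levelAt d s t)

def ExitsAtEnd (l : ℤ) {i : ℕ} (y : Fin i → ℤ) : Prop :=
  (∀ t < i, B (l + levelAt i y t)) ∧ ¬ B (l + levelAt i y i)

variable {B}

lemma forall_lt_succ_cons_iff {l k : ℤ} {d : ℕ} (s : Fin d → ℤ) (N : ℕ) :
    (∀ t < N + 1, B (l + levelAt (d + 1) (Fin.cons k s) t)) ↔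
      B l ∧ ∀ t < N, B (l + k + levelAt d s t) := by
  simp only [Nat.forall_lt_succ_left, levelAt_zero, add_zero, levelAt_cons, add_assoc]

lemma staysIn_cons {l k : ℤ} {d : ℕ} (s : Fin d → ℤ) :
    StaysIn B l (Fin.cons k s : Fin (d + 1) → ℤ) ↔ B l ∧ StaysIn B (l + k) s := by
  simp only [StaysIn, ← Nat.lt_succ_iff, forall_lt_succ_cons_iff]

lemma exitsAtEnd_cons {l k : ℤ} {d : ℕ} (s : Fin d → ℤ) :
    ExitsAtEnd B l (Fin.cons k s : Fin (d + 1) → ℤ) ↔ B l ∧ ExitsAtEnd B (l + k) s := by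
  rw [ExitsAtEnd, ExitsAtEnd, forall_lt_succ_cons_iff, levelAt_cons, ← add_assoc, and_assoc]

lemma StaysIn.start {l : ℤ} {d : ℕ} {s : Fin d → ℤ} (hs : StaysIn B l s) : B l := by
  simpa [levelAt_zero] using hs 0 (Nat.zero_le d)

lemma ExitsAtEnd.start {l : ℤ} {i : ℕ} {y : Fin i → ℤ} (hy : ExitsAtEnd B l y) (hi : i ≠ 0) :
    B l := by
  simpa [levelAt_zero] using hy.1 0 (Nat.pos_of_ne_zero hi)

lemma exitsAtEnd_nil {l : ℤ} (y : Fin 0 → ℤ) : ExitsAtEnd B l y ↔ ¬ B l := by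
  simp [ExitsAtEnd, levelAt_zero]

end Band

section Truncated

variable {M : Type*} [AddCommMonoid M] [Module ℝ M] (m : ℕ) (q : ℤ → ℝ) (B : ℤ → Prop)
  (T : Module.End ℝ M) (g : ℤ → M) (e : M)

def truncRec : ℕ → ℤ → M
  | 0, l => if B l then g l else e
  | d + 1, l => if B l then T (∑ k ∈ Icc (-(m : ℤ)) m, q k • truncRec d (l + k)) else e

def stayTerm (d : ℕ) (l : ℤ) : M :=
  ∑ s ∈ (paths d m).filter (StaysIn B l), pathWeight d q s • (T ^ d) (g (l + levelAt d s d))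

/-- The `i = 0` summand is `e` if `¬ B l` and `0` otherwise, which makes the expansion
`truncRec = stayTerm + exitTerm` hold also outside the band. -/
def exitTerm (c : ℝ) (d : ℕ) (l : ℤ) : M :=
  ∑ i ∈ range (d + 1), ∑ y ∈ (paths i m).filter (ExitsAtEnd B l), (pathWeight i q y * c ^ i) • e

variable {m q B T g e}

lemma stayTerm_of_not {l : ℤ} (hl : ¬ B l) (d : ℕ) : stayTerm m q B T g d l = 0 :=
  sum_eq_zero fun _ hs => absurd (mem_filter.1 hs).2.start hl

lemma stayTerm_zero {l : ℤ} (hl : B l) : stayTerm m q B T g 0 l = g l := by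
  have hnil : StaysIn B l (Fin.elim0 : Fin 0 → ℤ) := fun t ht => by
    simpa [Nat.le_zero.1 ht, levelAt_zero] using hl
  rw [stayTerm, sum_filter, sum_paths_zero, if_pos hnil]
  simp [pathWeight, levelAt_zero]

lemma stayTerm_succ {l : ℤ} (hl : B l) (d : ℕ) :
    stayTerm m q B T g (d + 1) l =
      T (∑ k ∈ Icc (-(m : ℤ)) m, q k • stayTerm m q B T g d (l + k)) := by
  rw [stayTerm, sum_filter_paths_succ (Q := fun k => StaysIn B (l + k))
    (fun k s => (staysIn_cons s).trans (and_iff_right hl))]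
  simp only [stayTerm, smul_sum, map_sum, map_smul, smul_smul, pathWeight_cons, levelAt_cons,
    add_assoc, pow_succ', Module.End.mul_apply]

lemma exitTerm_of_not {l : ℤ} (hl : ¬ B l) (c : ℝ) (d : ℕ) : exitTerm m q B e c d l = e := by
  rw [exitTerm, sum_range_succ', sum_eq_zero fun i _ => sum_eq_zero fun y hy =>
    absurd ((mem_filter.1 hy).2.start i.succ_ne_zero) hl, zero_add, sum_filter, sum_paths_zero,
    if_pos ((exitsAtEnd_nil _).2 hl)]
  simp [pathWeight]

lemma exitTerm_zero {l : ℤ} (hl : B l) (c : ℝ) : exitTerm m q B e c 0 l = 0 := by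
  simp [exitTerm, sum_filter, exitsAtEnd_nil, hl]

lemma exitTerm_succ {c : ℝ} (hTe : T e = c • e) {l : ℤ} (hl : B l) (d : ℕ) :
    exitTerm m q B e c (d + 1) l =
      T (∑ k ∈ Icc (-(m : ℤ)) m, q k • exitTerm m q B e c d (l + k)) := by
  rw [exitTerm, sum_range_succ', sum_filter, sum_paths_zero,
    if_neg (by simpa [exitsAtEnd_nil] using hl), add_zero]
  simp only [exitTerm, smul_sum, map_sum, map_smul, smul_smul, hTe]
  rw [sum_comm]
  refine sum_congr rfl fun i _ => ?_
  rw [sum_filter_paths_succ (Q := fun k => ExitsAtEnd B (l + k))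
    (fun k s => (exitsAtEnd_cons s).trans (and_iff_right hl))]
  simp only [pathWeight_cons, pow_succ]
  refine sum_congr rfl fun k _ => sum_congr rfl fun y _ => ?_
  congr 1
  ring

theorem truncRec_eq_stayTerm_add_exitTerm {c : ℝ} (hTe : T e = c • e) (d : ℕ) (l : ℤ) :
    truncRec m q B T g e d l = stayTerm m q B T g d l + exitTerm m q B e c d l := by
  induction d generalizing l with
  | zero =>
    by_cases hl : B l
    · rw [truncRec, if_pos hl, stayTerm_zero hl, exitTerm_zero hl, add_zero]
    · rw [truncRec, if_neg hl, stayTerm_of_not hl, exitTerm_of_not hl, zero_add]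
  | succ d ih =>
    by_cases hl : B l
    · simp only [truncRec, if_pos hl, ih, smul_add, sum_add_distrib, map_add,
        stayTerm_succ hl, exitTerm_succ hTe hl]
    · rw [truncRec, if_neg hl, stayTerm_of_not hl, exitTerm_of_not hl, zero_add]

end Truncated

section BinomialStep

def binomStep (c p : ℝ) : Module.End ℝ (ℕ → ℝ) :=
  c • (p • LinearMap.funLeft ℝ ℝ Nat.succ + (1 - p) • 1)

lemma binomStep_apply (c p : ℝ) (f : ℕ → ℝ) (j : ℕ) :
    binomStep c p f j = c * (f (j + 1) * p + f j * (1 - p)) := by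
  simp only [binomStep, LinearMap.smul_apply, LinearMap.add_apply, LinearMap.funLeft_apply,
    Module.End.one_apply, Pi.add_apply, Pi.smul_apply, smul_eq_mul]
  ring

lemma binomStep_const (c p b : ℝ) : binomStep c p (fun _ => b) = c • fun _ => b := by
  ext j
  simp only [binomStep_apply, Pi.smul_apply, smul_eq_mul]
  ring

lemma funLeft_succ_pow_apply (i : ℕ) (f : ℕ → ℝ) (j : ℕ) :
    (LinearMap.funLeft ℝ ℝ Nat.succ ^ i) f j = f (j + i) := by
  induction i generalizing j with
  | zero => simp
  | succ i ih =>
    rw [pow_succ', Module.End.mul_apply, LinearMap.funLeft_apply, ih]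
    congr 1
    omega

lemma binomStep_pow_apply (c p : ℝ) (d : ℕ) (f : ℕ → ℝ) (j : ℕ) :
    (binomStep c p ^ d) f j = c ^ d * ∑ i ∈ range (d + 1), binomP d p i * f (j + i) := by
  have hcomm : Commute (p • LinearMap.funLeft ℝ ℝ Nat.succ)
      ((1 - p) • (1 : Module.End ℝ (ℕ → ℝ))) :=
    ((Commute.one_right _).smul_right _).smul_left _
  rw [binomStep, smul_pow, hcomm.add_pow]
  simp only [smul_pow, one_pow, LinearMap.smul_apply, LinearMap.sum_apply,
    Module.End.mul_apply, Module.End.natCast_apply, Module.End.one_apply, Pi.smul_apply,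
    smul_eq_mul, binomP, mul_sum, Finset.sum_apply]
  refine sum_congr rfl fun i _ => ?_
  simp only [Pi.smul_apply, smul_eq_mul, nsmul_eq_mul, funLeft_succ_pow_apply,
    Pi.mul_apply, Pi.natCast_apply]
  ring

end BinomialStep

section PutPrice

-- Reducible, so that `if_pos`/`if_neg` also rewrite the band conditions written out in `VEtr`.
abbrev band (kbar lbar : ℕ) (l : ℤ) : Prop :=
  -(lbar : ℤ) ≤ l ∧ l ≤ (kbar : ℤ)

lemma putPayoff_eq_max_Sval (n : ℕ) (S0 K σ dt h : ℝ) (j : ℕ) (l : ℤ) :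
    putPayoff n S0 K σ dt h j l = max (K - Sval S0 σ dt h n j l) 0 := by
  rw [putPayoff, Sval, mul_comm h]

lemma VEtr_eq_truncRec (n m : ℕ) (q : ℤ → ℝ) (p dt S0 K σ h r b : ℝ) (kbar lbar : ℕ)
    (d j : ℕ) (l : ℤ) :
    VEtr n m q p dt S0 K σ h r b kbar lbar d j l =
      truncRec m q (band kbar lbar) (binomStep (Real.exp (-(r * dt))) p)
        (fun k i => putPayoff n S0 K σ dt h i k) (fun _ => b) d l j := by
  induction d generalizing j l with
  | zero =>
    by_cases hl : band kbar lbar l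
    · rw [VEtr, truncRec, if_pos hl, if_pos hl, putPayoff_eq_max_Sval]
    · rw [VEtr, truncRec, if_neg hl, if_neg hl]
  | succ d ih =>
    by_cases hl : band kbar lbar l
    · rw [VEtr, truncRec, if_pos hl, if_pos hl, binomStep_apply]
      simp only [Finset.sum_apply, Pi.smul_apply, smul_eq_mul, ih, sum_mul, ← sum_add_distrib]
      congr 1
      exact sum_congr rfl fun k _ => by ring
    · rw [VEtr, truncRec, if_neg hl, if_neg hl]

lemma sum_staysIn_band_eq_sum_qcut (n m : ℕ) (q : ℤ → ℝ) (kbar lbar : ℕ) (F : ℤ → ℝ) :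
    ∑ s ∈ (paths n m).filter (StaysIn (band kbar lbar) 0), pathWeight n q s * F (levelAt n s n) =
      ∑ k ∈ Icc (-(lbar : ℤ)) kbar, qcut n m q kbar lbar k * F k := by
  have hmaps : ∀ s ∈ (paths n m).filter (StaysIn (band kbar lbar) 0),
      levelAt n s n ∈ Icc (-(lbar : ℤ)) kbar := fun s hs => by
    simpa [band] using (mem_filter.1 hs).2 n le_rfl
  rw [← sum_fiberwise_of_maps_to hmaps]
  refine sum_congr rfl fun k _ => ?_
  rw [qcut, sum_mul, filter_filter]
  refine sum_congr (filter_congr fun s _ => ?_) fun s hs => by rw [(mem_filter.1 hs).2.1]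
  simp only [StaysIn, band, zero_add, and_comm]

lemma VTT_eq_stayTerm (n m : ℕ) (hn : n ≠ 0) (q : ℤ → ℝ) (p S0 K σ τ h r : ℝ) (kbar lbar : ℕ) :
    VTT n m q p S0 K σ τ h r kbar lbar =
      stayTerm m q (band kbar lbar) (binomStep (Real.exp (-(r * (τ / n)))) p)
        (fun k i => putPayoff n S0 K σ (τ / n) h i k) n 0 0 := by
  have hdisc : Real.exp (-(r * (τ / n))) ^ n = Real.exp (-(r * τ)) := by
    rw [← Real.exp_nat_mul]
    field_simp
  simp only [stayTerm, Finset.sum_apply, Pi.smul_apply, smul_eq_mul, binomStep_pow_apply, hdisc,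
    zero_add]
  rw [sum_staysIn_band_eq_sum_qcut n m q kbar lbar fun k => Real.exp (-(r * τ)) *
    ∑ j ∈ range (n + 1), binomP n p j * putPayoff n S0 K σ (τ / n) h j k, VTT, mul_sum]
  refine sum_congr rfl fun k _ => ?_
  simp only [mul_sum]
  exact sum_congr rfl fun j _ => by ring

lemma exitSum_eq_exitTerm (n m : ℕ) (q : ℤ → ℝ) (r dt : ℝ) (kbar lbar : ℕ) (b : ℝ) :
    exitSum n m q r dt kbar lbar b =
      exitTerm m q (band kbar lbar) (fun _ => b) (Real.exp (-(r * dt))) n 0 0 := by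
  have hband : band kbar lbar 0 := by simp [band]
  rw [exitSum, exitTerm, Finset.sum_apply, range_eq_Ico,
    sum_eq_sum_Ico_succ_bot (by omega : 0 < n + 1), zero_add, Ico_add_one_right_eq_Icc,
    Finset.sum_apply,
    sum_eq_zero fun y hy => absurd ((exitsAtEnd_nil y).1 (mem_filter.1 hy).2) (not_not.2 hband),
    zero_add]
  refine sum_congr rfl fun i _ => ?_
  rw [Finset.sum_apply]
  refine sum_congr (filter_congr fun y _ => ?_) fun y _ => ?_
  · simp only [ExitsAtEnd, band, zero_add]
  · rw [Pi.smul_apply, smul_eq_mul, ← Real.exp_nat_mul]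
    ring_nf

end PutPrice

end HScut

theorem VE_b_eq_Vhat_general (n m : ℕ) (hn : 1 ≤ n) (q : ℤ → ℝ)
    (S0 K σ τ h r p : ℝ) (kbar lbar : ℕ) :
    ∀ b : ℝ, 0 ≤ b →
      VEtr n m q p (τ / n) S0 K σ h r b kbar lbar n 0 0 =
        VTT n m q p S0 K σ τ h r kbar lbar + exitSum n m q r (τ / n) kbar lbar b := by
  intro b _
  rw [VEtr_eq_truncRec, truncRec_eq_stayTerm_add_exitTerm (binomStep_const _ _ b), Pi.add_apply,
    VTT_eq_stayTerm n m (by omega), exitSum_eq_exitTerm]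

/-- Lemma: for every `b ≥ 0`, the truncated backward European put price with boundary value
`b` satisfies `V_E^b(0,0,0) = V̂^b = V^{TT} +` (sum over first-exit prefixes of the prefix
probability times `b e^{−r i Δt}`). -/
theorem VE_b_eq_Vhat (n m : ℕ) (hn : 1 ≤ n) (hm : 1 ≤ m) (q : ℤ → ℝ)
    (hq : ∀ l : ℤ, -(m : ℤ) ≤ l → l ≤ (m : ℤ) → 0 ≤ q l)
    (hsum : ∑ l ∈ Finset.Icc (-(m : ℤ)) (m : ℤ), q l = 1)
    (S0 K σ τ h r p : ℝ) (hS0 : 0 < S0) (hK : 0 < K) (hh : 0 < h) (hτ : 0 < τ)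
    (hp0 : 0 ≤ p) (hp1 : p ≤ 1) (kbar lbar : ℕ) :
    ∀ b : ℝ, 0 ≤ b →
      VEtr n m q p (τ / n) S0 K σ h r b kbar lbar n 0 0 =
        VTT n m q p S0 K σ τ h r kbar lbar + exitSum n m q r (τ / n) kbar lbar b :=
  VE_b_eq_Vhat_general n m hn q S0 K σ τ h r p kbar lbar
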